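/- Suppose the characteristic equation τ^{2n} - φ(A)τ^n + φ(B) = 0 holds in L⟨τ⟩, and let E ∈ F_q[x] with F := φ(E). Then reducing modulo F (right Euclidean division) gives T^n(φ(A mod E)) = T^{2n}(1) + φ(B mod E) mod F, where T : L⟨τ⟩_{<deg F} → L⟨τ⟩_{<deg F} is U ↦ τU mod F. In particular, φ(A mod E) mod F = T^{-n}(T^{2n}(1) + (φ(B mod E) mod F)) when T is invertible. -/

import Mathlib

/-- An abstract model of the skew polynomial ring `L⟨τ⟩` with the commutation rule
`τ u = u ^ q τ`: a ring `S` with a coefficient embedding `C : L →+* S`, a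
distinguished element `tau`, and a coefficient function giving, for every element
of `S`, its (unique, by `indep`) representation as `∑ C (u_i) * tau ^ i`. -/
structure SkewPolyRing (q : ℕ) (L : Type*) [Field L] (S : Type*) [Ring S] where
  C : L →+* S
  tau : S
  tau_comm : ∀ u : L, tau * C u = C (u ^ q) * tau
  coeff : S → (ℕ →₀ L)
  sum_coeff : ∀ U : S, ((coeff U).sum fun i a => C a * tau ^ i) = U
  indep : ∀ f : ℕ →₀ L, ((f.sum fun i a => C a * tau ^ i) = 0) → f = 0

namespace SkewPolyRing

variable {q : ℕ} {L S : Type*} [Field L] [Ring S]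

/-- The degree of a skew polynomial (`⊥` for `0`). -/
noncomputable def degree (P : SkewPolyRing q L S) (U : S) : WithBot ℕ :=
  (P.coeff U).support.max

end SkewPolyRing

/-!
Modulo the left ideal `S·φ(E)`, the map `U ↦ m (τ U)` is left multiplication by `τ`,
`φ(A % E)` is congruent to `φ(A)`, and `τⁿ` is central because `u ^ q ^ n = u` on `L`; so both
sides are congruent to `τⁿ φ(A) = τ²ⁿ + φ(B)`. Both sides have degree `< deg φ(E)`, while a
nonzero left multiple of `φ(E)` has degree `≥ deg φ(E)` because leading coefficients multiply to a
nonzero element of `L`; hence they are equal.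
-/

namespace SkewPolyRing

variable {q : ℕ} {L S : Type*} [Field L] [Ring S] (P : SkewPolyRing q L S)

noncomputable def ofCoeff : (ℕ →₀ L) →+ S :=
  Finsupp.liftAddHom fun i => (AddMonoidHom.mulRight (P.tau ^ i)).comp P.C.toAddMonoidHom

lemma ofCoeff_apply (f : ℕ →₀ L) : P.ofCoeff f = f.sum fun i a => P.C a * P.tau ^ i := rfl

lemma ofCoeff_single (i : ℕ) (a : L) :
    P.ofCoeff (Finsupp.single i a) = P.C a * P.tau ^ i := by
  simp [ofCoeff_apply]

lemma ofCoeff_coeff (U : S) : P.ofCoeff (P.coeff U) = U := P.sum_coeff U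

lemma ofCoeff_injective : Function.Injective P.ofCoeff :=
  (injective_iff_map_eq_zero P.ofCoeff).2 P.indep

lemma coeff_add (U V : S) : P.coeff (U + V) = P.coeff U + P.coeff V :=
  P.ofCoeff_injective <| by rw [map_add, ofCoeff_coeff, ofCoeff_coeff, ofCoeff_coeff]

lemma coeff_sub (U V : S) : P.coeff (U - V) = P.coeff U - P.coeff V :=
  P.ofCoeff_injective <| by rw [map_sub, ofCoeff_coeff, ofCoeff_coeff, ofCoeff_coeff]

lemma coeff_eq_zero_iff {U : S} : P.coeff U = 0 ↔ U = 0 := by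
  rw [← P.ofCoeff_injective.eq_iff, ofCoeff_coeff, map_zero]

lemma tau_pow_mul_C (i : ℕ) (u : L) : P.tau ^ i * P.C u = P.C (u ^ q ^ i) * P.tau ^ i := by
  induction i generalizing u with
  | zero => simp
  | succ k ih =>
    rw [pow_succ, mul_assoc, P.tau_comm, ← mul_assoc, ih, ← pow_mul, ← pow_succ', mul_assoc]

lemma tau_pow_mul_comm {n : ℕ} (hfix : ∀ u : L, u ^ q ^ n = u) (U : S) :
    P.tau ^ n * U = U * P.tau ^ n := by
  rw [← P.ofCoeff_coeff U, ofCoeff_apply, Finsupp.mul_sum, Finsupp.sum_mul]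
  refine Finsupp.sum_congr fun i _ => ?_
  rw [← mul_assoc, tau_pow_mul_C, hfix, mul_assoc, mul_assoc, pow_mul_comm]

lemma C_mul_tau_pow_mul_C_mul_tau_pow (a b : L) (i j : ℕ) :
    P.C a * P.tau ^ i * (P.C b * P.tau ^ j) = P.C (a * b ^ q ^ i) * P.tau ^ (i + j) := by
  rw [mul_assoc, ← mul_assoc (P.tau ^ i), tau_pow_mul_C, map_mul, pow_add]
  simp only [mul_assoc]

lemma coeff_mul (U V : S) :
    P.coeff (U * V) = (P.coeff U).sum fun i a =>
      (P.coeff V).sum fun j b => Finsupp.single (i + j) (a * b ^ q ^ i) := by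
  apply P.ofCoeff_injective
  conv_lhs => rw [ofCoeff_coeff, ← P.ofCoeff_coeff U, ← P.ofCoeff_coeff V, ofCoeff_apply,
    ofCoeff_apply, Finsupp.sum_mul]
  simp only [map_finsuppSum, Finsupp.mul_sum, ofCoeff_single, C_mul_tau_pow_mul_C_mul_tau_pow]

lemma degree_eq_bot_iff {U : S} : P.degree U = ⊥ ↔ U = 0 := by
  rw [degree, Finset.max_eq_bot, Finsupp.support_eq_empty, coeff_eq_zero_iff]

lemma le_degree_of_coeff_ne_zero {U : S} {i : ℕ} (h : P.coeff U i ≠ 0) :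
    (i : WithBot ℕ) ≤ P.degree U :=
  Finset.le_max (Finsupp.mem_support_iff.2 h)

lemma coeff_ne_zero_of_degree_eq {U : S} {d : ℕ} (h : P.degree U = d) : P.coeff U d ≠ 0 :=
  Finsupp.mem_support_iff.1 (Finset.mem_of_max h)

lemma degree_add_le (U V : S) : P.degree (U + V) ≤ max (P.degree U) (P.degree V) := by
  rw [degree, coeff_add, degree, degree, ← Finset.max_union]
  exact Finset.max_mono Finsupp.support_add

lemma degree_sub_le (U V : S) : P.degree (U - V) ≤ max (P.degree U) (P.degree V) := by
  rw [degree, coeff_sub, degree, degree, ← Finset.max_union]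
  exact Finset.max_mono Finsupp.support_sub

lemma coeff_mul_add_of_degree_eq {U V : S} {d e : ℕ} (hU : P.degree U = d)
    (hV : P.degree V = e) : P.coeff (U * V) (d + e) = P.coeff U d * P.coeff V e ^ q ^ d := by
  have hU' : ∀ i ∈ (P.coeff U).support, i ≤ d := fun i hi =>
    WithBot.coe_le_coe.1 ((Finset.le_max hi).trans_eq hU)
  have hV' : ∀ j ∈ (P.coeff V).support, j ≤ e := fun j hj =>
    WithBot.coe_le_coe.1 ((Finset.le_max hj).trans_eq hV)
  simp only [coeff_mul, Finsupp.sum_apply, Finsupp.single_apply]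
  rw [Finsupp.sum, Finset.sum_eq_single_of_mem d (Finset.mem_of_max hU)]
  · rw [Finsupp.sum, Finset.sum_eq_single_of_mem e (Finset.mem_of_max hV)]
    · simp
    · intro j _ hj
      simp [hj]
  · intro i hi hid
    refine Finset.sum_eq_zero fun j hj => ?_
    have : i + j ≠ d + e := by have := hU' i hi; have := hV' j hj; omega
    simp [this]

lemma le_degree_mul (U V : S) : P.degree U + P.degree V ≤ P.degree (U * V) := by
  by_cases hU : P.degree U = ⊥
  · simp [hU]
  by_cases hV : P.degree V = ⊥
  · simp [hV]
  obtain ⟨d, hd⟩ := WithBot.ne_bot_iff_exists.1 hU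
  obtain ⟨e, he⟩ := WithBot.ne_bot_iff_exists.1 hV
  rw [← hd, ← he]
  refine P.le_degree_of_coeff_ne_zero (i := d + e) ?_
  rw [P.coeff_mul_add_of_degree_eq hd.symm he.symm]
  exact mul_ne_zero (P.coeff_ne_zero_of_degree_eq hd.symm)
    (pow_ne_zero _ (P.coeff_ne_zero_of_degree_eq he.symm))

lemma eq_zero_of_mem_span_singleton_of_degree_lt {F U : S} (hU : U ∈ Ideal.span {F})
    (hlt : P.degree U < P.degree F) : U = 0 := by
  obtain ⟨Q, rfl⟩ := Ideal.mem_span_singleton'.1 hU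
  by_cases hQ : P.degree Q = ⊥
  · rw [P.degree_eq_bot_iff.1 hQ, zero_mul]
  obtain ⟨d, hd⟩ := WithBot.ne_bot_iff_exists.1 hQ
  refine absurd (P.le_degree_mul Q F) (not_le.2 (hlt.trans_le ?_))
  rw [← hd]
  exact le_add_of_nonneg_left (WithBot.coe_nonneg.2 d.zero_le)

lemma eq_of_mkQ_eq_of_degree_lt {F U V : S} (hU : P.degree U < P.degree F)
    (hV : P.degree V < P.degree F)
    (h : (Ideal.span {F}).mkQ U = (Ideal.span {F}).mkQ V) : U = V :=
  sub_eq_zero.1 <| P.eq_zero_of_mem_span_singleton_of_degree_lt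
    ((Submodule.Quotient.eq _).1 h) ((P.degree_sub_le U V).trans_lt (max_lt hU hV))

end SkewPolyRing

lemma Submodule.mkQ_iterate_mul_left {R : Type*} [Ring R] {I : Ideal R} {m : R → R}
    (hm : ∀ U, I.mkQ (m U) = I.mkQ U) (t U : R) (k : ℕ) :
    I.mkQ ((fun U => m (t * U))^[k] U) = t ^ k • I.mkQ U := by
  induction k with
  | zero => simp
  | succ k ih =>
    rw [Function.iterate_succ_apply', hm, ← smul_eq_mul, map_smul, ih, pow_succ', mul_smul]

lemma Ideal.mkQ_span_singleton_map_mod {R S : Type*} [EuclideanDomain R] [Ring S] (f : R →+* S)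
    (a b : R) : (Ideal.span {f b}).mkQ (f (a % b)) = (Ideal.span {f b}).mkQ (f a) := by
  rw [Submodule.mkQ_apply, Submodule.mkQ_apply, Submodule.Quotient.eq, Ideal.mem_span_singleton']
  refine ⟨-f (a / b), ?_⟩
  rw [EuclideanDomain.mod_eq_sub_mul_div, mul_comm b, map_sub, map_mul, neg_mul]
  abel

theorem characteristic_equation_mod_F_general
    (q n : ℕ) (Fq L S : Type*) [Field Fq] [Fintype Fq] [Field L] [Fintype L]
    [Algebra Fq L] [Ring S]
    (hq : q = Fintype.card Fq) (hn : Module.finrank Fq L = n)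
    (P : SkewPolyRing q L S)
    (φ : Polynomial Fq →+* S)
    (A B E : Polynomial Fq)
    (hchar : P.tau ^ (2 * n) - φ A * P.tau ^ n + φ B = 0)
    (m : S → S)
    (hm : ∀ U : S, (∃ Q : S, U = Q * φ E + m U) ∧
      P.degree (m U) < P.degree (φ E)) :
    (fun U => m (P.tau * U))^[n] (m (φ (A % E))) =
      (fun U => m (P.tau * U))^[2 * n] (m 1) + m (φ (B % E)) := by
  have hmI : ∀ U, (Ideal.span {φ E}).mkQ (m U) = (Ideal.span {φ E}).mkQ U := fun U => by
    obtain ⟨Q, hQ⟩ := (hm U).1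
    rw [Submodule.mkQ_apply, Submodule.mkQ_apply, Submodule.Quotient.eq,
      Ideal.mem_span_singleton']
    exact ⟨-Q, by rw [neg_mul, eq_sub_of_add_eq hQ.symm, neg_sub]⟩
  have hdeg : ∀ k U, P.degree ((fun U => m (P.tau * U))^[k] (m U)) < P.degree (φ E) := by
    rintro (_ | k) U
    · exact (hm U).2
    · rw [Function.iterate_succ_apply']
      exact (hm _).2
  have hfix : ∀ u : L, u ^ q ^ n = u := fun u => by
    rw [hq, ← hn, ← Module.card_eq_pow_finrank]
    exact FiniteField.pow_card u
  have hchar' : P.tau ^ n * φ A = P.tau ^ (2 * n) * 1 + φ B := by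
    rw [P.tau_pow_mul_comm hfix, mul_one]
    exact (sub_eq_zero.1 (by rw [← hchar]; abel)).symm
  refine P.eq_of_mkQ_eq_of_degree_lt (hdeg n _)
    ((P.degree_add_le _ _).trans_lt (max_lt (hdeg _ _) (hm _).2)) ?_
  rw [map_add, Submodule.mkQ_iterate_mul_left hmI, Submodule.mkQ_iterate_mul_left hmI,
    hmI, hmI, hmI, Ideal.mkQ_span_singleton_map_mod, Ideal.mkQ_span_singleton_map_mod,
    ← LinearMap.map_smul, ← LinearMap.map_smul, ← map_add, smul_eq_mul, smul_eq_mul, hchar']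

/-- from the characteristic equation
`τ^{2n} - φ(A)·τ^n + φ(B) = 0` in `L⟨τ⟩`, reducing modulo `F = φ(E)` by right
Euclidean division (`m U` denotes `U mod F`, `T(U) = τU mod F`) gives
`T^n(φ(A mod E) mod F) = T^{2n}(1 mod F) + (φ(B mod E) mod F)`. -/
theorem characteristic_equation_mod_F
    (p q n : ℕ) (Fq L S : Type*) [Field Fq] [Fintype Fq] [Field L] [Fintype L]
    [Algebra Fq L] [FiniteDimensional Fq L] [Ring S] (hp : p.Prime) [CharP L p]
    (hq : q = Fintype.card Fq) (hn : Module.finrank Fq L = n)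
    (P : SkewPolyRing q L S)
    (c g Δ : L) (hΔ : Δ ≠ 0)
    (γ : Polynomial Fq →+* L) (hc : c = γ Polynomial.X)
    (φ : Polynomial Fq →+* S)
    (hconst : ∀ a : Fq, φ (Polynomial.C a) = P.C (algebraMap Fq L a))
    (hX : φ Polynomial.X = P.C c + P.C g * P.tau + P.C Δ * P.tau ^ 2)
    (A B E : Polynomial Fq) (hE : Polynomial.aeval c E ≠ 0)
    (hchar : P.tau ^ (2 * n) - φ A * P.tau ^ n + φ B = 0)
    (m : S → S)
    (hm : ∀ U : S, (∃ Q : S, U = Q * φ E + m U) ∧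
      P.degree (m U) < P.degree (φ E)) :
    (fun U => m (P.tau * U))^[n] (m (φ (A % E))) =
      (fun U => m (P.tau * U))^[2 * n] (m 1) + m (φ (B % E)) :=
  characteristic_equation_mod_F_general q n Fq L S hq hn P φ A B E hchar m hm
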